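/- For all integers n ≥ 2, χ_2(n) ≤ ⌊2n/3⌋ + 1. -/

import Mathlib

/-- A coloring of the nonzero vectors of `F_2^n` with `k` colors is proper if no
triple `{x, y, x+y}` of distinct nonzero vectors is monochromatic. -/
def ProperColoring2 (n k : ℕ) (c : (Fin n → ZMod 2) → Fin k) : Prop :=
  ∀ x y : Fin n → ZMod 2, x ≠ 0 → y ≠ 0 → x ≠ y →
    ¬ (c x = c y ∧ c y = c (x + y))

/-- `chi2 n` : the chromatic number of the binary projective space `PG(n-1,2)`,
i.e. the least number of colors needed to color the nonzero vectors of `F_2^n`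
with no monochromatic triple `{x, y, x+y}`. -/
noncomputable def chi2 (n : ℕ) : ℕ :=
  sInf {k : ℕ | ∃ c : (Fin n → ZMod 2) → Fin k, ProperColoring2 n k c}

/-!
If `T` is a colour class of a proper colouring of `F₂^d`, then `T ∪ {0}` contains no triple
`a, b, a + b` other than the trivial ones, so `(a, b) ↦ ([a ≠ 0], b)` is additive on such triples of
`(T ∪ {0}) × F₂^m`. Hence colouring `F₂^d × F₂^m` by the first colouring outside
`(T ∪ {0}) × F₂^m` and by a pulled-back proper colouring of `F₂ × F₂^m` on it is proper, which gives
`χ₂(d + m) + 1 ≤ χ₂(d) + χ₂(m + 1)`. With `d = 4` and `χ₂(4) ≤ 3` this is `χ₂(n + 3) ≤ χ₂(n) + 2`,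
and the bound follows by induction from `χ₂(2) ≤ 2`, `χ₂(3) ≤ 3`, `χ₂(4) ≤ 3`.
-/

def IsProperColoring {G κ : Type*} [AddMonoid G] (c : G → κ) : Prop :=
  ∀ x y : G, x ≠ 0 → y ≠ 0 → x ≠ y → ¬ (c x = c y ∧ c y = c (x + y))

lemma ZModModule.eq_of_add_eq_zero {V : Type*} [AddCommGroup V] [Module (ZMod 2) V] {x y : V}
    (h : x + y = 0) : x = y :=
  (add_eq_zero_iff_eq_neg.1 h).trans (ZModModule.neg_eq_self y)

namespace IsProperColoring

variable {G H κ κ' : Type*}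

lemma of_injective [AddMonoid G] {c : G → κ} (hc : Function.Injective c) : IsProperColoring c :=
  fun _ _ _ _ hxy h => hxy (hc h.1)

lemma comp_injective [AddMonoid G] {c : G → κ} (hc : IsProperColoring c) {f : κ → κ'}
    (hf : Function.Injective f) : IsProperColoring (f ∘ c) :=
  fun x y hx hy hxy h => hc x y hx hy hxy ⟨hf h.1, hf h.2⟩

lemma comp_addEquiv [AddMonoid G] [AddMonoid H] {c : H → κ} (hc : IsProperColoring c)
    (e : G ≃+ H) : IsProperColoring (c ∘ e) := by
  intro x y hx hy hxy h
  refine hc (e x) (e y) (by simpa using hx) (by simpa using hy) (e.injective.ne hxy) ?_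
  simpa [map_add] using h

lemma update_zero [AddCommGroup G] [Module (ZMod 2) G] [DecidableEq G] {c : G → κ}
    (hc : IsProperColoring c) (k : κ) : IsProperColoring (Function.update c 0 k) := by
  intro x y hx hy hxy h
  have hxy0 : x + y ≠ 0 := fun h0 => hxy (ZModModule.eq_of_add_eq_zero h0)
  simp only [Function.update_of_ne hx, Function.update_of_ne hy, Function.update_of_ne hxy0] at h
  exact hc x y hx hy hxy h

end IsProperColoring

section Product

variable {V W α β : Type*}

section Defs

variable [Zero V] [DecidableEq V]

def nonzeroBit (a : V) : ZMod 2 := if a = 0 then 0 else 1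

lemma nonzeroBit_eq_zero_iff {a : V} : nonzeroBit a = 0 ↔ a = 0 := by
  unfold nonzeroBit; split_ifs <;> simp_all

def collapse (x : V × W) : ZMod 2 × W := (nonzeroBit x.1, x.2)

lemma collapse_eq_zero_iff [Zero W] {x : V × W} : collapse x = 0 ↔ x = 0 := by
  simp [collapse, Prod.ext_iff, nonzeroBit_eq_zero_iff]

def prodColoring (c₁ : V → Option α) (c₂ : ZMod 2 × W → β) (x : V × W) : α ⊕ β :=
  (c₁ x.1).elim (.inr (c₂ (collapse x))) .inl

variable {c₁ : V → Option α} {c₂ : ZMod 2 × W → β}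

lemma prodColoring_eq_inl_iff {x : V × W} {i : α} :
    prodColoring c₁ c₂ x = .inl i ↔ c₁ x.1 = some i := by
  unfold prodColoring; cases c₁ x.1 <;> simp

lemma prodColoring_eq_inr_iff {x : V × W} {j : β} :
    prodColoring c₁ c₂ x = .inr j ↔ c₁ x.1 = none ∧ c₂ (collapse x) = j := by
  unfold prodColoring; cases c₁ x.1 <;> simp

end Defs

variable [AddCommGroup V] [Module (ZMod 2) V] [DecidableEq V] [AddCommGroup W] [Module (ZMod 2) W]
  {c₁ : V → Option α} {c₂ : ZMod 2 × W → β}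

lemma IsProperColoring.nonzeroBit_add (hc : IsProperColoring c₁) {a b : V}
    (ha : c₁ a = none) (hb : c₁ b = none) (hab : c₁ (a + b) = none) :
    nonzeroBit (a + b) = nonzeroBit a + nonzeroBit b := by
  by_cases ha0 : a = 0
  · simp [ha0, nonzeroBit]
  by_cases hb0 : b = 0
  · simp [hb0, nonzeroBit]
  by_cases hab' : a = b
  · subst hab'
    simp [ZModModule.add_self, nonzeroBit, ha0]
  · exact (hc a b ha0 hb0 hab' ⟨ha.trans hb.symm, hb.trans hab.symm⟩).elim

lemma IsProperColoring.comp_collapse (hc₁ : IsProperColoring c₁) (hc₂ : IsProperColoring c₂)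
    {x y : V × W} (hx : x ≠ 0) (hy : y ≠ 0) (hxy : x ≠ y) (hnx : c₁ x.1 = none)
    (hny : c₁ y.1 = none) (hnxy : c₁ (x + y).1 = none) :
    ¬ (c₂ (collapse x) = c₂ (collapse y) ∧ c₂ (collapse y) = c₂ (collapse (x + y))) := by
  have hadd : collapse (x + y) = collapse x + collapse y :=
    Prod.ext (hc₁.nonzeroBit_add hnx hny hnxy) rfl
  have hne : collapse x ≠ collapse y := fun h => hxy <| ZModModule.eq_of_add_eq_zero <|
    collapse_eq_zero_iff.1 (by rw [hadd, h, ZModModule.add_self])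
  rw [hadd]
  exact hc₂ _ _ (mt collapse_eq_zero_iff.1 hx) (mt collapse_eq_zero_iff.1 hy) hne

lemma IsProperColoring.prodColoring (hc₁ : IsProperColoring c₁) (h₀ : c₁ 0 = none)
    (hc₂ : IsProperColoring c₂) : IsProperColoring (prodColoring c₁ c₂) := by
  intro x y hx hy hxy ⟨hxy_eq, hyz_eq⟩
  cases hcx : c₁ x.1 with
  | some i =>
    have hx' := prodColoring_eq_inl_iff (c₂ := c₂).2 hcx
    have hy' : c₁ y.1 = some i := prodColoring_eq_inl_iff.1 (hxy_eq ▸ hx')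
    have hz' : c₁ (x + y).1 = some i := prodColoring_eq_inl_iff.1 (hyz_eq ▸ hxy_eq ▸ hx')
    have ne_zero : ∀ {a}, c₁ a = some i → a ≠ 0 := fun h ha => by simp [ha, h₀] at h
    refine hc₁ x.1 y.1 (ne_zero hcx) (ne_zero hy') (fun h => ne_zero hz' ?_)
      ⟨hcx.trans hy'.symm, hy'.trans hz'.symm⟩
    simp [h, ZModModule.add_self]
  | none =>
    have hx' := prodColoring_eq_inr_iff (c₂ := c₂).2 ⟨hcx, rfl⟩
    obtain ⟨hny, hxy₂⟩ := prodColoring_eq_inr_iff.1 (hxy_eq ▸ hx')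
    obtain ⟨hnz, hyz₂⟩ := prodColoring_eq_inr_iff.1 (hyz_eq ▸ hxy_eq ▸ hx')
    exact hc₁.comp_collapse hc₂ hx hy hxy hcx hny hnz ⟨hxy₂.symm, hxy₂.trans hyz₂.symm⟩

end Product

lemma chi2_le_card {n : ℕ} {κ : Type*} [Fintype κ] {c : (Fin n → ZMod 2) → κ}
    (hc : IsProperColoring c) : chi2 n ≤ Fintype.card κ := by
  apply Nat.sInf_le
  exact ⟨Fintype.equivFin κ ∘ c, hc.comp_injective (Fintype.equivFin κ).injective⟩

lemma exists_isProperColoring_chi2 (n : ℕ) :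
    ∃ c : (Fin n → ZMod 2) → Fin (chi2 n), IsProperColoring c :=
  Nat.sInf_mem (s := {k | ∃ c : (Fin n → ZMod 2) → Fin k, ProperColoring2 n k c})
    ⟨_, _, IsProperColoring.of_injective (Fintype.equivFin _).injective⟩

lemma chi2_add_le (d m : ℕ) : chi2 (d + m) + 1 ≤ chi2 d + chi2 (m + 1) := by
  obtain ⟨c₁, hc₁⟩ := exists_isProperColoring_chi2 d
  obtain ⟨c₂, hc₂⟩ := exists_isProperColoring_chi2 (m + 1)
  obtain ⟨p, hp⟩ := Nat.exists_eq_succ_of_ne_zero (c₁ 0).pos.ne'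
  let top : Fin (chi2 d) ≃ Option (Fin p) := (finCongr hp).trans (finSuccEquiv p)
  let split : (Fin (d + m) → ZMod 2) ≃ₗ[ZMod 2] (Fin d → ZMod 2) × (Fin m → ZMod 2) :=
    (LinearEquiv.funCongrLeft _ _ finSumFinEquiv).trans
      (LinearEquiv.sumArrowLequivProdArrow _ _ _ _)
  let cons := Fin.consLinearEquiv (ZMod 2) fun _ : Fin (m + 1) => ZMod 2
  have hc₁' := (hc₁.comp_injective top.injective).update_zero none
  have hc := ((hc₁'.prodColoring (Function.update_self _ _ _)
    (hc₂.comp_addEquiv cons.toAddEquiv)).comp_addEquiv split.toAddEquiv)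
  have := chi2_le_card hc
  simp only [Fintype.card_sum, Fintype.card_fin] at this
  omega

def twoColoring (x : Fin 2 → ZMod 2) : Fin 2 := if x = ![1, 1] then 1 else 0

lemma chi2_two_le : chi2 2 ≤ 2 :=
  chi2_le_card (c := twoColoring) (by unfold IsProperColoring; decide)

def fourColoring (x : Fin 4 → ZMod 2) : Fin 3 :=
  let v := (x 0).val + 2 * (x 1).val + 4 * (x 2).val + 8 * (x 3).val
  if v ∈ [1, 2, 4, 8, 15] then 0 else if v ∈ [3, 5, 7, 10, 11] then 1 else 2

lemma chi2_four_le : chi2 4 ≤ 3 :=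
  chi2_le_card (c := fourColoring) (by unfold IsProperColoring; decide)

lemma chi2_add_three_le {n : ℕ} (hn : n ≠ 0) : chi2 (n + 3) ≤ chi2 n + 2 := by
  obtain ⟨k, rfl⟩ : ∃ k, n = k + 1 := ⟨n - 1, by omega⟩
  show chi2 (k + 4) ≤ chi2 (k + 1) + 2
  have : chi2 (k + 4) + 1 ≤ chi2 4 + chi2 (k + 1) := by simpa [add_comm] using chi2_add_le 4 k
  have := chi2_four_le
  omega

theorem chi2_le_two_thirds (n : ℕ) (hn : 2 ≤ n) : chi2 n ≤ 2 * n / 3 + 1 := by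
  induction n using Nat.strong_induction_on with
  | _ n ih =>
    match n, hn with
    | 2, _ => exact chi2_two_le
    | 3, _ =>
      have : chi2 3 + 1 ≤ chi2 2 + chi2 2 := chi2_add_le 2 1
      have := chi2_two_le
      omega
    | 4, _ => exact chi2_four_le
    | k + 5, _ =>
      have : chi2 (k + 5) ≤ chi2 (k + 2) + 2 := chi2_add_three_le (k + 1).succ_ne_zero
      have := ih (k + 2) (by omega) (by omega)
      omega
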